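/- arXiv:1904.09369 — 2 statements merged into one kernel-verified Lean document; each statement's English description precedes it below -/
import Mathlib

section
/- Let w_1 ∈ K and let (g_t)_{t≥1} be arbitrary vectors of H. Define G_t = √(∑_{τ=1}^t ‖g_τ‖²), and define the iterates by w_{t+1} = Π_K(w_t − η_t g_t) with adaptive step size η_t = D/(√2 · G_t) whenever G_t > 0, and w_{t+1} = w_t whenever G_t = 0. Then for every w* ∈ K and every T ≥ 1, ∑_{t=1}^T ⟨g_t, w_t − w*⟩ ≤ √2 · D · √(∑_{t=1}^T ‖g_t‖²). -/
/-!
Projected gradient descent with step size `η_t` satisfies, for every `u ∈ K`,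
`⟪g_t, w_t - u⟫ ≤ (‖w_t - u‖² - ‖w_{t+1} - u‖²) / (2 η_t) + η_t ‖g_t‖² / 2`, because the
projection onto a convex set is nonexpansive towards points of the set. Since `1 / η_t` is
nondecreasing and `‖w_t - u‖² ≤ D²`, summation by parts bounds the telescoping terms by
`D² / (2 η_T)`, and the remaining terms are controlled by
`∑_t c_t / √(c_1 + ⋯ + c_t) ≤ 2 √(c_1 + ⋯ + c_T)`.
With `η_t = D / (√2 G_t)` both contributions equal `D G_T / √2`.
-/

open Finset
open scoped RealInnerProductSpace

section

variable {H : Type*} [NormedAddCommGroup H] [InnerProductSpace ℝ H]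

theorem norm_sub_le_of_forall_norm_sub_le {K : Set H} (hK : Convex ℝ K) {v p : H} (hp : p ∈ K)
    (hmin : ∀ u ∈ K, ‖v - p‖ ≤ ‖v - u‖) {u : H} (hu : u ∈ K) : ‖p - u‖ ≤ ‖v - u‖ := by
  have : Nonempty K := ⟨⟨p, hp⟩⟩
  have hinf : ‖v - p‖ = ⨅ x : K, ‖v - x‖ :=
    le_antisymm (le_ciInf fun x => hmin x x.2)
      (ciInf_le (f := fun x : K => ‖v - x‖) ⟨0, Set.forall_mem_range.2 fun _ => norm_nonneg _⟩
        ⟨p, hp⟩)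
  have hobtuse : ⟪v - p, u - p⟫ ≤ 0 := (norm_eq_iInf_iff_real_inner_le_zero hK hp).1 hinf u hu
  have hexpand : ‖v - u‖ ^ 2 = ‖v - p‖ ^ 2 - 2 * ⟪v - p, u - p⟫ + ‖p - u‖ ^ 2 := by
    rw [← norm_neg (p - u), neg_sub, ← norm_sub_sq_real]
    congr 2
    abel
  refine (sq_le_sq₀ (norm_nonneg _) (norm_nonneg _)).1 ?_
  nlinarith [sq_nonneg ‖v - p‖]

theorem inner_le_of_norm_sub_le_norm_sub_smul {g w p u : H} {η : ℝ} (hη : 0 < η)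
    (hp : ‖p - u‖ ≤ ‖w - η • g - u‖) :
    ⟪g, w - u⟫ ≤ (‖w - u‖ ^ 2 - ‖p - u‖ ^ 2) / (2 * η) + η / 2 * ‖g‖ ^ 2 := by
  have hexpand : ‖w - η • g - u‖ ^ 2 = ‖w - u‖ ^ 2 - 2 * η * ⟪g, w - u⟫ + η ^ 2 * ‖g‖ ^ 2 := by
    rw [sub_right_comm, norm_sub_sq_real, real_inner_smul_right, norm_smul, real_inner_comm,
      Real.norm_of_nonneg hη.le]
    ring
  have hsq : ‖p - u‖ ^ 2 ≤ ‖w - η • g - u‖ ^ 2 := pow_le_pow_left₀ (norm_nonneg _) hp 2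
  have hrhs : (‖w - u‖ ^ 2 - ‖p - u‖ ^ 2) / (2 * η) + η / 2 * ‖g‖ ^ 2 =
      (‖w - u‖ ^ 2 - ‖p - u‖ ^ 2 + η ^ 2 * ‖g‖ ^ 2) / (2 * η) := by
    field_simp
  rw [hrhs, le_div_iff₀ (by positivity)]
  linarith

theorem inner_le_of_adaptive_step {proj : H → H} {g x x' u : H} {D G : ℝ} (hD : 0 < D)
    (hproj : ∀ v, ‖proj v - u‖ ≤ ‖v - u‖) (hg : ‖g‖ ≤ G)
    (hpos : 0 < G → x' = proj (x - (D / (√2 * G)) • g)) (hzero : G = 0 → x' = x) :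
    ⟪g, x - u⟫ ≤
      √2 * G / (2 * D) * (‖x - u‖ ^ 2 - ‖x' - u‖ ^ 2) + D / (2 * √2) * (‖g‖ ^ 2 / G) := by
  rcases ((norm_nonneg g).trans hg).eq_or_lt with hG | hG
  · have hg0 : g = 0 := norm_le_zero_iff.1 (hG ▸ hg)
    simp [hg0, hzero hG.symm]
  · have h := inner_le_of_norm_sub_le_norm_sub_smul (by positivity) (hpos hG ▸ hproj _)
    convert h using 2 <;> field_simp

end

theorem sum_Icc_mul_sub_succ_le {a b : ℕ → ℝ} {M : ℝ} (ha : Monotone a) (ha_nonneg : ∀ t, 0 ≤ a t)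
    (hb : ∀ t, 1 ≤ t → b t ≤ M) (hb_nonneg : ∀ t, 0 ≤ b t) (T : ℕ) :
    ∑ t ∈ Icc 1 T, a t * (b t - b (t + 1)) ≤ a T * M := by
  suffices h : ∀ T, ∑ t ∈ Icc 1 T, a t * (b t - b (t + 1)) ≤ a T * (M - b (T + 1)) by
    nlinarith [h T, ha_nonneg T, hb_nonneg (T + 1)]
  intro T
  induction T with
  | zero => simpa using mul_nonneg (ha_nonneg 0) (sub_nonneg.2 (hb 1 le_rfl))
  | succ n ih =>
    rw [sum_Icc_succ_top (by omega)]
    nlinarith [ha (Nat.le_succ n), hb (n + 1) (by omega)]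

theorem div_sqrt_add_le {S c : ℝ} (hS : 0 ≤ S) (hc : 0 ≤ c) :
    c / √(S + c) ≤ 2 * (√(S + c) - √S) := by
  rcases (add_nonneg hS hc).eq_or_lt with h | h
  · have hc0 : c = 0 := by linarith
    simp [hc0]
  · -- `c = (√(S + c) - √S) (√(S + c) + √S)` and the second factor is at most `2 √(S + c)`
    have hsqrt_le : √S ≤ √(S + c) := Real.sqrt_le_sqrt (by linarith)
    rw [div_le_iff₀ (Real.sqrt_pos.2 h)]
    nlinarith [Real.sq_sqrt hS, Real.sq_sqrt h.le, Real.sqrt_nonneg S]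

theorem sum_div_sqrt_sum_le {c : ℕ → ℝ} (hc : ∀ t, 0 ≤ c t) (T : ℕ) :
    ∑ t ∈ Icc 1 T, c t / √(∑ τ ∈ Icc 1 t, c τ) ≤ 2 * √(∑ t ∈ Icc 1 T, c t) := by
  induction T with
  | zero => simp
  | succ n ih =>
    rw [sum_Icc_succ_top (by omega), sum_Icc_succ_top (by omega)]
    have := div_sqrt_add_le (S := ∑ t ∈ Icc 1 n, c t) (sum_nonneg fun t _ => hc t) (hc (n + 1))
    linarith

theorem monotone_sqrt_sum_Icc {c : ℕ → ℝ} (hc : ∀ t, 0 ≤ c t) :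
    Monotone fun t => √(∑ τ ∈ Icc 1 t, c τ) := fun _ _ hst =>
  Real.sqrt_le_sqrt <| sum_le_sum_of_subset_of_nonneg (Icc_subset_Icc_right hst)
    fun t _ _ => hc t

theorem norm_le_sqrt_sum_Icc_sq {H : Type*} [NormedAddCommGroup H] (g : ℕ → H) {t : ℕ}
    (ht : 1 ≤ t) : ‖g t‖ ≤ √(∑ τ ∈ Icc 1 t, ‖g τ‖ ^ 2) :=
  Real.le_sqrt_of_sq_le <|
    single_le_sum (f := fun τ => ‖g τ‖ ^ 2) (fun _ _ => sq_nonneg _) (mem_Icc.2 ⟨ht, le_rfl⟩)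

theorem sum_adaptive_regret_terms_le {b c : ℕ → ℝ} {D : ℝ} (hD : 0 < D) (hc : ∀ t, 0 ≤ c t)
    (hb : ∀ t, 1 ≤ t → b t ≤ D ^ 2) (hb_nonneg : ∀ t, 0 ≤ b t) (T : ℕ) :
    ∑ t ∈ Icc 1 T, (√2 * √(∑ τ ∈ Icc 1 t, c τ) / (2 * D) * (b t - b (t + 1))
        + D / (2 * √2) * (c t / √(∑ τ ∈ Icc 1 t, c τ))) ≤
      √2 * D * √(∑ t ∈ Icc 1 T, c t) := by
  set G := fun t => √(∑ τ ∈ Icc 1 t, c τ)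
  have htelescope := sum_Icc_mul_sub_succ_le (a := fun t => √2 * G t / (2 * D))
    (fun s t hst => by dsimp only; gcongr; exact monotone_sqrt_sum_Icc hc hst)
    (fun t => by positivity) hb hb_nonneg T
  have h2 : √2 * √2 = 2 := Real.mul_self_sqrt zero_le_two
  calc _ ≤ √2 * G T / (2 * D) * D ^ 2 + D / (2 * √2) * (2 * G T) := by
        rw [sum_add_distrib, ← mul_sum]
        exact add_le_add htelescope
          (mul_le_mul_of_nonneg_left (sum_div_sqrt_sum_le hc T) (by positivity))
    _ = √2 * D * G T := by
        field_simp
        linear_combination (-G T) * h2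

theorem stmt1_general
    {H : Type*} [NormedAddCommGroup H] [InnerProductSpace ℝ H]
    (K : Set H) (hKconvex : Convex ℝ K)
    (D : ℝ) (hD : ∀ w ∈ K, ∀ v ∈ K, ‖w - v‖ ≤ D)
    (proj : H → H)
    (hproj_mem : ∀ v, proj v ∈ K)
    (hproj_min : ∀ v, ∀ u ∈ K, ‖v - proj v‖ ≤ ‖v - u‖)
    (g : ℕ → H)
    (G : ℕ → ℝ) (hG : ∀ t, G t = Real.sqrt (∑ τ ∈ Icc 1 t, ‖g τ‖ ^ 2))
    (w : ℕ → H) (hw1 : w 1 ∈ K)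
    (hiter_pos : ∀ t, 1 ≤ t → 0 < G t →
      w (t + 1) = proj (w t - (D / (Real.sqrt 2 * G t)) • g t))
    (hiter_zero : ∀ t, 1 ≤ t → G t = 0 → w (t + 1) = w t)
    (wstar : H) (hwstar : wstar ∈ K)
    (T : ℕ) :
    (∑ t ∈ Icc 1 T, ⟪g t, w t - wstar⟫) ≤
      Real.sqrt 2 * D * Real.sqrt (∑ t ∈ Icc 1 T, ‖g t‖ ^ 2) := by
  obtain rfl : G = fun t => √(∑ τ ∈ Icc 1 t, ‖g τ‖ ^ 2) := funext hG
  have hw_mem : ∀ t, 1 ≤ t → w t ∈ K := by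
    refine Nat.le_induction hw1 fun t ht hwt => ?_
    rcases (Real.sqrt_nonneg _).eq_or_lt with h | h
    · rwa [hiter_zero t ht h.symm]
    · exact hiter_pos t ht h ▸ hproj_mem _
  have hdist t (ht : 1 ≤ t) : ‖w t - wstar‖ ≤ D := hD _ (hw_mem t ht) _ hwstar
  rcases ((norm_nonneg _).trans (hdist 1 le_rfl)).eq_or_lt with rfl | hD_pos
  · have hterm t (ht : t ∈ Icc 1 T) : ⟪g t, w t - wstar⟫ = 0 := by
      rw [norm_le_zero_iff.1 (hdist t (mem_Icc.1 ht).1), inner_zero_right]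
    simp [sum_eq_zero hterm]
  refine (sum_le_sum fun t ht => ?_).trans <| sum_adaptive_regret_terms_le hD_pos
    (fun t => sq_nonneg ‖g t‖) (fun t ht => pow_le_pow_left₀ (norm_nonneg _) (hdist t ht) 2)
    (fun t => by positivity) T
  obtain ⟨ht, -⟩ := mem_Icc.1 ht
  exact inner_le_of_adaptive_step hD_pos
    (fun v => norm_sub_le_of_forall_norm_sub_le hKconvex (hproj_mem v) (hproj_min v) hwstar)
    (norm_le_sqrt_sum_Icc_sq g ht) (hiter_pos t ht) (hiter_zero t ht)

/-- regret bound for projected sub-gradient descent with the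
adaptive step sizes `η_t = D / (√2 · G_t)`, `G_t = √(∑_{τ≤t} ‖g_τ‖²)`. -/
theorem stmt1
    {H : Type*} [NormedAddCommGroup H] [InnerProductSpace ℝ H]
    (K : Set H) (hKne : K.Nonempty) (hKclosed : IsClosed K) (hKconvex : Convex ℝ K)
    (D : ℝ) (hD : ∀ w ∈ K, ∀ v ∈ K, ‖w - v‖ ≤ D)
    (proj : H → H)
    (hproj_mem : ∀ v, proj v ∈ K)
    (hproj_min : ∀ v, ∀ u ∈ K, ‖v - proj v‖ ≤ ‖v - u‖)
    (g : ℕ → H)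
    (G : ℕ → ℝ) (hG : ∀ t, G t = Real.sqrt (∑ τ ∈ Icc 1 t, ‖g τ‖ ^ 2))
    (w : ℕ → H) (hw1 : w 1 ∈ K)
    (hiter_pos : ∀ t, 1 ≤ t → 0 < G t →
      w (t + 1) = proj (w t - (D / (Real.sqrt 2 * G t)) • g t))
    (hiter_zero : ∀ t, 1 ≤ t → G t = 0 → w (t + 1) = w t)
    (wstar : H) (hwstar : wstar ∈ K)
    (T : ℕ) (hT : 1 ≤ T) :
    (∑ t ∈ Icc 1 T, ⟪g t, w t - wstar⟫) ≤
      Real.sqrt 2 * D * Real.sqrt (∑ t ∈ Icc 1 T, ‖g t‖ ^ 2) :=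
  stmt1_general K hKconvex D hD proj hproj_mem hproj_min g G hG w hw1 hiter_pos hiter_zero wstar
    hwstar T
end

section
/- Let w_1 ∈ K be deterministic, let (g̃_t)_{1≤t≤T} be square-integrable H-valued random vectors with g̃_t being 𝓕_t-measurable, and let (g_t)_{1≤t≤T} be 𝓕_{t−1}-measurable H-valued random vectors satisfying the unbiasedness condition 𝔼[g̃_t | 𝓕_{t−1}] = g_t for each t. Define the iterates w_{t+1} = Π_K(w_t − η_t g̃_t) with η_t = D/(√2 · √(∑_{τ=1}^t ‖g̃_τ‖²)) whenever the denominator is positive, and w_{t+1} = w_t otherwise. Then for every fixed w* ∈ K, the expected linearized regret satisfies 𝔼[∑_{t=1}^T ⟨g_t, w_t − w*⟩] ≤ √2 · D · 𝔼[√(∑_{t=1}^T ‖g̃_t‖²)]. -/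
open MeasureTheory Finset
open scoped RealInnerProductSpace

/-!
Pathwise, each projected step satisfies
`2 η_t ⟪g̃_t, w_t - w*⟫ ≤ ‖w_t - w*‖² - ‖w_{t+1} - w*‖² + η_t² ‖g̃_t‖²`, since the projection
onto `K` is nonexpansive towards points of `K`. Summing against the increasing weights `1 / η_t`
telescopes the distances (each at most `D`), and `∑ x_t / √(x_1 + ⋯ + x_t) ≤ 2 √(x_1 + ⋯ + x_T)`
controls the gradient terms, giving `∑ ⟪g̃_t, w_t - w*⟫ ≤ √2 D √(∑ ‖g̃_t‖²)` for every outcome.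
In expectation `g̃_t` may be replaced by `g_t`: the iterate `w_t` is bounded and
`𝓕_{t-1}`-measurable, so the pull-out property of conditional expectation applies.
-/

section MetricProjection

variable {H : Type*} [NormedAddCommGroup H] [InnerProductSpace ℝ H]

def IsMetricProjection (K : Set H) (proj : H → H) : Prop :=
  (∀ v, proj v ∈ K) ∧ ∀ v, ∀ u ∈ K, ‖v - proj v‖ ≤ ‖v - u‖

namespace IsMetricProjection

variable {K : Set H} {proj : H → H}

theorem inner_sub_le_zero (hK : Convex ℝ K) (hP : IsMetricProjection K proj) (v : H) {u : H}
    (hu : u ∈ K) : ⟪v - proj v, u - proj v⟫ ≤ 0 := by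
  have : Nonempty K := ⟨⟨proj v, hP.1 v⟩⟩
  refine (norm_eq_iInf_iff_real_inner_le_zero hK (hP.1 v)).1 ?_ u hu
  have hbdd : BddBelow (Set.range fun w : K => ‖v - (w : H)‖) :=
    ⟨0, by rintro _ ⟨w, rfl⟩; exact norm_nonneg _⟩
  exact le_antisymm (le_ciInf fun w => hP.2 v w w.2) (ciInf_le hbdd ⟨proj v, hP.1 v⟩)

theorem lipschitzWith_one (hK : Convex ℝ K) (hP : IsMetricProjection K proj) :
    LipschitzWith 1 proj := by
  refine LipschitzWith.of_dist_le_mul fun v u => ?_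
  rw [NNReal.coe_one, one_mul, dist_eq_norm, dist_eq_norm]
  have hv := hP.inner_sub_le_zero hK v (hP.1 u)
  have hu := hP.inner_sub_le_zero hK u (hP.1 v)
  have hsplit : v - u = (v - proj v) - (u - proj u) + (proj v - proj u) := by abel
  have hv' : 0 ≤ ⟪v - proj v, proj v - proj u⟫ := by
    rw [← neg_sub (proj u), inner_neg_right]
    linarith
  have key : ‖proj v - proj u‖ ^ 2 ≤ ⟪v - u, proj v - proj u⟫ := by
    rw [hsplit, inner_add_left, inner_sub_left, real_inner_self_eq_norm_sq]
    linarith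
  nlinarith [real_inner_le_norm (v - u) (proj v - proj u), norm_nonneg (v - u),
    norm_nonneg (proj v - proj u)]

omit [InnerProductSpace ℝ H] in
theorem map_eq_self (hP : IsMetricProjection K proj) {u : H} (hu : u ∈ K) : proj u = u := by
  have h := hP.2 u u hu
  rw [sub_self, norm_zero, norm_le_zero_iff, sub_eq_zero] at h
  exact h.symm

theorem norm_map_sub_le (hK : Convex ℝ K) (hP : IsMetricProjection K proj) (v : H) {u : H}
    (hu : u ∈ K) : ‖proj v - u‖ ≤ ‖v - u‖ := by
  simpa [hP.map_eq_self hu, dist_eq_norm] using (hP.lipschitzWith_one hK).dist_le_mul v u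

theorem two_mul_inner_le (hK : Convex ℝ K) (hP : IsMetricProjection K proj) (W G : H) {u : H}
    (hu : u ∈ K) (η : ℝ) :
    2 * η * ⟪G, W - u⟫ ≤ ‖W - u‖ ^ 2 - ‖proj (W - η • G) - u‖ ^ 2 + η ^ 2 * ‖G‖ ^ 2 := by
  have hexp : ‖W - η • G - u‖ ^ 2 = ‖W - u‖ ^ 2 - 2 * η * ⟪G, W - u⟫ + η ^ 2 * ‖G‖ ^ 2 := by
    rw [sub_right_comm, norm_sub_sq_real, inner_smul_right, norm_smul, mul_pow,
      Real.norm_eq_abs, sq_abs, real_inner_comm]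
    ring
  have := pow_le_pow_left₀ (norm_nonneg _) (hP.norm_map_sub_le hK (W - η • G) hu) 2
  linarith

theorem sqrt_two_mul_inner_le (hK : Convex ℝ K) (hP : IsMetricProjection K proj) (W G : H)
    {u : H} (hu : u ∈ K) (D : ℝ) {c : ℝ} (hc : 0 < c) :
    √2 * D * ⟪G, W - u⟫ ≤
      (‖W - u‖ ^ 2 - ‖proj (W - (D / (√2 * c)) • G) - u‖ ^ 2) * c + D ^ 2 / 2 * (‖G‖ ^ 2 / c) := by
  have hc0 : c ≠ 0 := hc.ne'
  have h := mul_le_mul_of_nonneg_right (hP.two_mul_inner_le hK W G hu (D / (√2 * c))) hc.le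
  have hs : √2 ^ 2 = 2 := Real.sq_sqrt zero_le_two
  have hs0 : √2 ≠ 0 := by positivity
  generalize ⟪G, W - u⟫ = x at h ⊢
  refine (le_of_eq ?_).trans (h.trans (le_of_eq ?_))
  · field_simp
    rw [hs]
    ring
  · rw [div_pow, mul_pow, hs]
    field_simp

end IsMetricProjection

end MetricProjection

theorem sum_Icc_sub_succ_mul_le {a c : ℕ → ℝ} {B : ℝ} (hc : Monotone c) (hc0 : c 0 = 0)
    (ha : ∀ t, 1 ≤ t → a t ≤ B) (n : ℕ) :
    ∑ t ∈ Icc 1 n, (a t - a (t + 1)) * c t ≤ (B - a (n + 1)) * c n := by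
  induction n with
  | zero => simp [hc0]
  | succ n ih =>
    rw [sum_Icc_succ_top (Nat.le_add_left 1 n)]
    nlinarith [ha (n + 1) (Nat.le_add_left 1 n), hc (Nat.le_succ n)]

theorem sum_Icc_div_sqrt_partialSum_le {x : ℕ → ℝ} (hx : ∀ t, 0 ≤ x t) (n : ℕ) :
    ∑ t ∈ Icc 1 n, x t / √(∑ τ ∈ Icc 1 t, x τ) ≤ 2 * √(∑ t ∈ Icc 1 n, x t) := by
  induction n with
  | zero => simp
  | succ n ih =>
    rw [sum_Icc_succ_top (Nat.le_add_left 1 n), sum_Icc_succ_top (Nat.le_add_left 1 n)]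
    set s := ∑ τ ∈ Icc 1 n, x τ
    have hs : 0 ≤ s := sum_nonneg fun τ _ => hx τ
    have hmono : √s ≤ √(s + x (n + 1)) := Real.sqrt_le_sqrt (le_add_of_nonneg_right (hx _))
    -- with `r = √(s + x)`, `q = √s`: `x = r² - q²`, so `x / r ≤ 2 (r - q)` is `(r - q)² ≥ 0`
    have key : x (n + 1) / √(s + x (n + 1)) ≤ 2 * √(s + x (n + 1)) - 2 * √s := by
      rcases (Real.sqrt_nonneg (s + x (n + 1))).eq_or_lt with h0 | hpos
      · rw [← h0, div_zero]
        linarith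
      · rw [div_le_iff₀ hpos]
        nlinarith [Real.sq_sqrt hs, Real.sq_sqrt (add_nonneg hs (hx (n + 1))),
          sq_nonneg (√(s + x (n + 1)) - √s)]
    linarith

section AdaGradNorm

variable {H : Type*} [NormedAddCommGroup H] [InnerProductSpace ℝ H]

structure IsAdaGradNormSeq (proj : H → H) (D : ℝ) (G W : ℕ → H) : Prop where
  succ_of_pos : ∀ t, 1 ≤ t → 0 < √(∑ τ ∈ Icc 1 t, ‖G τ‖ ^ 2) →
    W (t + 1) = proj (W t - (D / (√2 * √(∑ τ ∈ Icc 1 t, ‖G τ‖ ^ 2))) • G t)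
  succ_of_eq_zero : ∀ t, 1 ≤ t → √(∑ τ ∈ Icc 1 t, ‖G τ‖ ^ 2) = 0 → W (t + 1) = W t

namespace IsAdaGradNormSeq

variable {K : Set H} {proj : H → H} {D : ℝ} {G W : ℕ → H}

theorem succ_eq_ite (hW : IsAdaGradNormSeq proj D G W) {t : ℕ} (ht : 1 ≤ t) :
    W (t + 1) = if 0 < √(∑ τ ∈ Icc 1 t, ‖G τ‖ ^ 2) then
      proj (W t - (D / (√2 * √(∑ τ ∈ Icc 1 t, ‖G τ‖ ^ 2))) • G t) else W t := by
  split_ifs with h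
  · exact hW.succ_of_pos t ht h
  · exact hW.succ_of_eq_zero t ht (le_antisymm (not_lt.1 h) (Real.sqrt_nonneg _))

theorem mem (hW : IsAdaGradNormSeq proj D G W) (hproj : ∀ v, proj v ∈ K) (hW1 : W 1 ∈ K)
    {t : ℕ} (ht : 1 ≤ t) : W t ∈ K := by
  induction t, ht using Nat.le_induction with
  | base => exact hW1
  | succ n hn ih =>
    rw [hW.succ_eq_ite hn]
    split_ifs
    exacts [hproj _, ih]

theorem sqrt_two_mul_inner_le (hW : IsAdaGradNormSeq proj D G W) (hK : Convex ℝ K)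
    (hP : IsMetricProjection K proj) {u : H} (hu : u ∈ K) {t : ℕ} (ht : 1 ≤ t) :
    √2 * D * ⟪G t, W t - u⟫ ≤
      (‖W t - u‖ ^ 2 - ‖W (t + 1) - u‖ ^ 2) * √(∑ τ ∈ Icc 1 t, ‖G τ‖ ^ 2)
        + D ^ 2 / 2 * (‖G t‖ ^ 2 / √(∑ τ ∈ Icc 1 t, ‖G τ‖ ^ 2)) := by
  rcases (Real.sqrt_nonneg (∑ τ ∈ Icc 1 t, ‖G τ‖ ^ 2)).eq_or_lt with h0 | hpos
  · have hG : ‖G t‖ ^ 2 ≤ 0 :=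
      (single_le_sum (f := fun τ => ‖G τ‖ ^ 2) (fun _ _ => sq_nonneg _)
        (right_mem_Icc.2 ht)).trans (Real.sqrt_eq_zero'.1 h0.symm)
    have hG0 : G t = 0 :=
      norm_eq_zero.1 ((pow_eq_zero_iff two_ne_zero).1 (le_antisymm hG (sq_nonneg _)))
    simp [hG0, ← h0]
  · rw [hW.succ_of_pos t ht hpos]
    exact hP.sqrt_two_mul_inner_le hK (W t) (G t) hu D hpos

theorem sum_inner_le (hW : IsAdaGradNormSeq proj D G W) (hK : Convex ℝ K)
    (hP : IsMetricProjection K proj) (hD : ∀ w ∈ K, ∀ v ∈ K, ‖w - v‖ ≤ D) (hW1 : W 1 ∈ K)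
    {u : H} (hu : u ∈ K) (T : ℕ) :
    ∑ t ∈ Icc 1 T, ⟪G t, W t - u⟫ ≤ √2 * D * √(∑ t ∈ Icc 1 T, ‖G t‖ ^ 2) := by
  set c : ℕ → ℝ := fun t => √(∑ τ ∈ Icc 1 t, ‖G τ‖ ^ 2) with hc
  set a : ℕ → ℝ := fun t => ‖W t - u‖ ^ 2
  have hWK : ∀ t, 1 ≤ t → W t ∈ K := fun t ht => hW.mem hP.1 hW1 ht
  rcases ((norm_nonneg _).trans (hD u hu u hu)).eq_or_lt with hD0 | hDpos
  · have hzero : ∀ t ∈ Icc 1 T, ⟪G t, W t - u⟫ = 0 := fun t ht => by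
      have hWu : W t - u = 0 := norm_le_zero_iff.1 (hD0 ▸ hD _ (hWK t (mem_Icc.1 ht).1) u hu)
      rw [hWu, inner_zero_right]
    rw [sum_eq_zero hzero, ← hD0]
    simp
  have hA : ∑ t ∈ Icc 1 T, (a t - a (t + 1)) * c t ≤ D ^ 2 * c T := by
    have hcmono : Monotone c := fun s t hst =>
      Real.sqrt_le_sqrt (sum_le_sum_of_subset_of_nonneg (Icc_subset_Icc_right hst)
        fun _ _ _ => sq_nonneg _)
    have := sum_Icc_sub_succ_mul_le hcmono (by simp [hc])
      (fun t ht => pow_le_pow_left₀ (norm_nonneg _) (hD _ (hWK t ht) u hu) 2) T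
    nlinarith [sq_nonneg ‖W (T + 1) - u‖, Real.sqrt_nonneg (∑ τ ∈ Icc 1 T, ‖G τ‖ ^ 2)]
  have hB := sum_Icc_div_sqrt_partialSum_le (x := fun t => ‖G t‖ ^ 2) (fun _ => sq_nonneg _) T
  have hsum : √2 * D * ∑ t ∈ Icc 1 T, ⟪G t, W t - u⟫ ≤ √2 * D * (√2 * D * c T) := by
    calc √2 * D * ∑ t ∈ Icc 1 T, ⟪G t, W t - u⟫
        ≤ ∑ t ∈ Icc 1 T, (a t - a (t + 1)) * c t
          + D ^ 2 / 2 * ∑ t ∈ Icc 1 T, ‖G t‖ ^ 2 / c t := by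
          rw [mul_sum, mul_sum, ← sum_add_distrib]
          exact sum_le_sum fun t ht => hW.sqrt_two_mul_inner_le hK hP hu (mem_Icc.1 ht).1
      _ ≤ D ^ 2 * c T + D ^ 2 / 2 * (2 * c T) := by gcongr
      _ = √2 * D * (√2 * D * c T) := by
          rw [show √2 * D * (√2 * D * c T) = √2 ^ 2 * D ^ 2 * c T by ring,
            Real.sq_sqrt zero_le_two]
          ring
  exact le_of_mul_le_mul_left hsum (by positivity)

end IsAdaGradNormSeq

end AdaGradNorm

section Expectation

variable {Ω : Type*} {mΩ : MeasurableSpace Ω} {μ : Measure Ω}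
  {H : Type*} [NormedAddCommGroup H] [InnerProductSpace ℝ H]

theorem MeasureTheory.Integrable.inner_of_norm_le {f X : Ω → H} (hf : Integrable f μ)
    (hX : AEStronglyMeasurable X μ) {C : ℝ} (hXC : ∀ ω, ‖X ω‖ ≤ C) :
    Integrable (fun ω => ⟪f ω, X ω⟫) μ :=
  (innerSL ℝ).integrable_of_bilin_of_bdd_right C hf hX (ae_of_all _ hXC)

omit [InnerProductSpace ℝ H] in
theorem integrable_sqrt_sum_norm_sq {ι : Type*} (s : Finset ι) {f : ι → Ω → H}
    (hf : ∀ i ∈ s, Integrable (f i) μ) :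
    Integrable (fun ω => √(∑ i ∈ s, ‖f i ω‖ ^ 2)) μ := by
  refine (integrable_finsetSum s fun i hi => (hf i hi).norm).mono' ?_ (ae_of_all _ fun ω => ?_)
  · exact Real.continuous_sqrt.comp_aestronglyMeasurable
      (Finset.aestronglyMeasurable_fun_sum s fun i hi => (hf i hi).1.norm.pow 2)
  · rw [Real.norm_of_nonneg (Real.sqrt_nonneg _), Real.sqrt_le_iff]
    exact ⟨sum_nonneg fun _ _ => norm_nonneg _, sum_sq_le_sq_sum_of_nonneg fun _ _ => norm_nonneg _⟩

variable [CompleteSpace H] [IsFiniteMeasure μ]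

theorem integral_inner_condExp_left {m : MeasurableSpace Ω} (hm : m ≤ mΩ) {f X : Ω → H}
    (hf : Integrable f μ) (hX : StronglyMeasurable[m] X) {C : ℝ} (hXC : ∀ ω, ‖X ω‖ ≤ C) :
    ∫ ω, ⟪(μ[f | m]) ω, X ω⟫ ∂μ = ∫ ω, ⟪f ω, X ω⟫ ∂μ := by
  have hpull := condExp_bilin_of_stronglyMeasurable_right (innerSL ℝ) hX
    (hf.inner_of_norm_le (hX.mono hm).aestronglyMeasurable hXC) hf
  calc ∫ ω, ⟪(μ[f | m]) ω, X ω⟫ ∂μ = ∫ ω, (μ[fun ω => ⟪f ω, X ω⟫ | m]) ω ∂μ :=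
        integral_congr_ae hpull.symm
    _ = ∫ ω, ⟪f ω, X ω⟫ ∂μ := integral_condExp hm

theorem integral_sum_inner_eq_of_condExp_eq {ι : Type*} (s : Finset ι)
    {m : ι → MeasurableSpace Ω} (hm : ∀ i ∈ s, m i ≤ mΩ) {f g X : ι → Ω → H}
    (hf : ∀ i ∈ s, Integrable (f i) μ) (hfg : ∀ i ∈ s, μ[f i | m i] =ᵐ[μ] g i)
    (hX : ∀ i ∈ s, StronglyMeasurable[m i] (X i)) {C : ℝ} (hXC : ∀ i ∈ s, ∀ ω, ‖X i ω‖ ≤ C) :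
    ∫ ω, ∑ i ∈ s, ⟪g i ω, X i ω⟫ ∂μ = ∫ ω, ∑ i ∈ s, ⟪f i ω, X i ω⟫ ∂μ := by
  have hXae : ∀ i ∈ s, AEStronglyMeasurable (X i) μ := fun i hi =>
    ((hX i hi).mono (hm i hi)).aestronglyMeasurable
  have hg : ∀ i ∈ s, Integrable (g i) μ := fun i hi => integrable_condExp.congr (hfg i hi)
  rw [integral_finsetSum s fun i hi => (hg i hi).inner_of_norm_le (hXae i hi) (hXC i hi),
    integral_finsetSum s fun i hi => (hf i hi).inner_of_norm_le (hXae i hi) (hXC i hi)]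
  refine sum_congr rfl fun i hi => ?_
  rw [← integral_inner_condExp_left (hm i hi) (hf i hi) (hX i hi) (hXC i hi)]
  exact integral_congr_ae ((hfg i hi).mono fun ω hω => by simp only [hω])

end Expectation

theorem stronglyMeasurable_adaGradNormSeq {Ω : Type*} {mΩ : MeasurableSpace Ω}
    (𝓕 : Filtration ℕ mΩ) {H : Type*} [NormedAddCommGroup H] [InnerProductSpace ℝ H]
    {proj : H → H} (hproj : Continuous proj) {D : ℝ} {G W : ℕ → Ω → H}
    (hW : ∀ ω, IsAdaGradNormSeq proj D (G · ω) (W · ω)) (hW1 : StronglyMeasurable[𝓕 0] (W 1))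
    {T : ℕ} (hG : ∀ t ∈ Icc 1 T, StronglyMeasurable[𝓕 t] (G t)) :
    ∀ t ∈ Icc 1 T, StronglyMeasurable[𝓕 (t - 1)] (W t) := by
  suffices h : ∀ n, n < T → StronglyMeasurable[𝓕 n] (W (n + 1)) by
    intro t ht
    obtain ⟨n, rfl⟩ := Nat.exists_eq_add_of_le' (mem_Icc.1 ht).1
    exact h n (by simp at ht; omega)
  intro n
  induction n with
  | zero => exact fun _ => hW1
  | succ n ih =>
    intro hn
    have hS : Measurable[𝓕 (n + 1)] fun ω => ∑ τ ∈ Icc 1 (n + 1), ‖G τ ω‖ ^ 2 :=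
      Finset.measurable_fun_sum _ fun τ hτ =>
        (((hG τ (Icc_subset_Icc_right hn.le hτ)).mono (𝓕.mono (mem_Icc.1 hτ).2)).norm.measurable
          |>.pow_const 2)
    have hWn : StronglyMeasurable[𝓕 (n + 1)] (W (n + 1)) := (ih (by omega)).mono (𝓕.mono n.le_succ)
    have hstep : StronglyMeasurable[𝓕 (n + 1)] fun ω =>
        (D / (√2 * √(∑ τ ∈ Icc 1 (n + 1), ‖G τ ω‖ ^ 2))) • G (n + 1) ω :=
      (measurable_const.div (measurable_const.mul hS.sqrt)).stronglyMeasurable.smul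
        (hG (n + 1) (mem_Icc.2 ⟨Nat.le_add_left 1 n, hn.le⟩))
    convert StronglyMeasurable.ite (measurableSet_lt measurable_const hS.sqrt)
      (hproj.comp_stronglyMeasurable (hWn.sub hstep)) hWn using 1
    exact funext fun ω => (hW ω).succ_eq_ite (Nat.le_add_left 1 n)

theorem stmt5_general
    {Ω : Type*} {mΩ : MeasurableSpace Ω} {μ : Measure Ω} [IsProbabilityMeasure μ]
    (𝓕 : Filtration ℕ mΩ)
    {H : Type*} [NormedAddCommGroup H] [InnerProductSpace ℝ H] [CompleteSpace H]
    (K : Set H) (hKconvex : Convex ℝ K)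
    (D : ℝ) (hD : ∀ w ∈ K, ∀ v ∈ K, ‖w - v‖ ≤ D)
    (proj : H → H)
    (hproj_mem : ∀ v, proj v ∈ K)
    (hproj_min : ∀ v, ∀ u ∈ K, ‖v - proj v‖ ≤ ‖v - u‖)
    (T : ℕ) (g gtld : ℕ → Ω → H)
    (hgtld_sq : ∀ t ∈ Icc 1 T, MemLp (gtld t) 2 μ)
    (hgtld_meas : ∀ t ∈ Icc 1 T, StronglyMeasurable[𝓕 t] (gtld t))
    (hunbiased : ∀ t ∈ Icc 1 T, μ[gtld t | 𝓕 (t - 1)] =ᵐ[μ] g t)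
    (w : ℕ → Ω → H) (w₁ : H) (hw₁K : w₁ ∈ K) (hw1 : ∀ ω, w 1 ω = w₁)
    (hiter_pos : ∀ t, 1 ≤ t → ∀ ω,
      0 < Real.sqrt (∑ τ ∈ Icc 1 t, ‖gtld τ ω‖ ^ 2) →
      w (t + 1) ω = proj (w t ω -
        (D / (Real.sqrt 2 * Real.sqrt (∑ τ ∈ Icc 1 t, ‖gtld τ ω‖ ^ 2))) • gtld t ω))
    (hiter_zero : ∀ t, 1 ≤ t → ∀ ω,
      Real.sqrt (∑ τ ∈ Icc 1 t, ‖gtld τ ω‖ ^ 2) = 0 → w (t + 1) ω = w t ω)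
    (wstar : H) (hwstar : wstar ∈ K) :
    (∫ ω, (∑ t ∈ Icc 1 T, ⟪g t ω, w t ω - wstar⟫) ∂μ) ≤
      Real.sqrt 2 * D * ∫ ω, Real.sqrt (∑ t ∈ Icc 1 T, ‖gtld t ω‖ ^ 2) ∂μ := by
  have hP : IsMetricProjection K proj := ⟨hproj_mem, hproj_min⟩
  have hw : ∀ ω, IsAdaGradNormSeq proj D (gtld · ω) (w · ω) := fun ω =>
    ⟨fun t ht => hiter_pos t ht ω, fun t ht => hiter_zero t ht ω⟩
  have hw₁ : ∀ ω, w 1 ω ∈ K := fun ω => hw1 ω ▸ hw₁K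
  have hw_meas := stronglyMeasurable_adaGradNormSeq 𝓕 (hP.lipschitzWith_one hKconvex).continuous
    hw (funext hw1 ▸ stronglyMeasurable_const) hgtld_meas
  have hw_le : ∀ t ∈ Icc 1 T, ∀ ω, ‖w t ω - wstar‖ ≤ D := fun t ht ω =>
    hD _ ((hw ω).mem hproj_mem (hw₁ ω) (mem_Icc.1 ht).1) _ hwstar
  have hgtld : ∀ t ∈ Icc 1 T, Integrable (gtld t) μ := fun t ht =>
    (hgtld_sq t ht).integrable one_le_two
  calc ∫ ω, ∑ t ∈ Icc 1 T, ⟪g t ω, w t ω - wstar⟫ ∂μ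
      = ∫ ω, ∑ t ∈ Icc 1 T, ⟪gtld t ω, w t ω - wstar⟫ ∂μ :=
        integral_sum_inner_eq_of_condExp_eq _ (fun _ _ => 𝓕.le _) hgtld hunbiased
          (fun t ht => (hw_meas t ht).sub stronglyMeasurable_const) hw_le
    _ ≤ ∫ ω, √2 * D * √(∑ t ∈ Icc 1 T, ‖gtld t ω‖ ^ 2) ∂μ :=
        integral_mono (integrable_finsetSum _ fun t ht => (hgtld t ht).inner_of_norm_le
            (((hw_meas t ht).mono (𝓕.le _)).sub stronglyMeasurable_const).aestronglyMeasurable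
            (hw_le t ht))
          ((integrable_sqrt_sum_norm_sq _ hgtld).const_mul _)
          fun ω => (hw ω).sum_inner_le hKconvex hP hD (hw₁ ω) hwstar T
    _ = √2 * D * ∫ ω, √(∑ t ∈ Icc 1 T, ‖gtld t ω‖ ^ 2) ∂μ := integral_const_mul _ _

/-- expected linearized-regret bound for adaptive projected
descent driven by unbiased noisy sub-gradient observations. -/
theorem stmt5
    {Ω : Type*} {mΩ : MeasurableSpace Ω} {μ : Measure Ω} [IsProbabilityMeasure μ]
    (𝓕 : Filtration ℕ mΩ)
    {H : Type*} [NormedAddCommGroup H] [InnerProductSpace ℝ H] [CompleteSpace H]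
    (K : Set H) (hKne : K.Nonempty) (hKclosed : IsClosed K) (hKconvex : Convex ℝ K)
    (D : ℝ) (hD : ∀ w ∈ K, ∀ v ∈ K, ‖w - v‖ ≤ D)
    (proj : H → H)
    (hproj_mem : ∀ v, proj v ∈ K)
    (hproj_min : ∀ v, ∀ u ∈ K, ‖v - proj v‖ ≤ ‖v - u‖)
    (T : ℕ) (g gtld : ℕ → Ω → H)
    (hgtld_sq : ∀ t ∈ Icc 1 T, MemLp (gtld t) 2 μ)
    (hgtld_meas : ∀ t ∈ Icc 1 T, StronglyMeasurable[𝓕 t] (gtld t))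
    (hg_meas : ∀ t ∈ Icc 1 T, StronglyMeasurable[𝓕 (t - 1)] (g t))
    (hunbiased : ∀ t ∈ Icc 1 T, μ[gtld t | 𝓕 (t - 1)] =ᵐ[μ] g t)
    (w : ℕ → Ω → H) (w₁ : H) (hw₁K : w₁ ∈ K) (hw1 : ∀ ω, w 1 ω = w₁)
    (hiter_pos : ∀ t, 1 ≤ t → ∀ ω,
      0 < Real.sqrt (∑ τ ∈ Icc 1 t, ‖gtld τ ω‖ ^ 2) →
      w (t + 1) ω = proj (w t ω -
        (D / (Real.sqrt 2 * Real.sqrt (∑ τ ∈ Icc 1 t, ‖gtld τ ω‖ ^ 2))) • gtld t ω))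
    (hiter_zero : ∀ t, 1 ≤ t → ∀ ω,
      Real.sqrt (∑ τ ∈ Icc 1 t, ‖gtld τ ω‖ ^ 2) = 0 → w (t + 1) ω = w t ω)
    (wstar : H) (hwstar : wstar ∈ K) :
    (∫ ω, (∑ t ∈ Icc 1 T, ⟪g t ω, w t ω - wstar⟫) ∂μ) ≤
      Real.sqrt 2 * D * ∫ ω, Real.sqrt (∑ t ∈ Icc 1 T, ‖gtld t ω‖ ^ 2) ∂μ :=
  stmt5_general 𝓕 K hKconvex D hD proj hproj_mem hproj_min T g gtld hgtld_sq hgtld_meas hunbiased w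
    w₁ hw₁K hw1 hiter_pos hiter_zero wstar hwstar
end
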